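/- arXiv:2003.04176 — 5 statements merged into one kernel-verified Lean document; each statement's English description precedes it below -/
import Mathlib

section
/- Persistence: for any interpretation ⟨h,t⟩, selection function κ, and formula φ, if ⟨h,t⟩ ⊨_κ φ then ⟨t,t⟩ ⊨_κ φ. -/
/-- Valuations over variables `X` and domain `D`; `none` stands for undefined. -/
abbrev Val (X D : Type) := X → Option D

/-- `v ⊆ v'` on valuations: every defined value of `v` is kept by `v'`. -/
def Val.le {X D : Type} (v v' : Val X D) : Prop :=
  ∀ x d, v x = some d → v' x = some d

/-- Formulas over a type `C` of constraint atoms. -/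
inductive Form (C : Type) : Type
  | bot : Form C
  | atom : C → Form C
  | and : Form C → Form C → Form C
  | or : Form C → Form C → Form C
  | imp : Form C → Form C → Form C

/-- HT_C satisfaction `⟨h,t⟩ ⊨_κ φ`, given a denotation `den` of basic atoms `C0`
and the κ-evaluation `eval` mapping an atom (possibly with conditional terms)
to a basic atom relative to an interpretation `⟨w,t⟩`. -/
def sat {X D C C0 : Type} (den : C0 → Set (Val X D))
    (eval : Val X D → Val X D → C → C0) :
    Val X D → Val X D → Form C → Prop
  | _, _, .bot => False
  | h, t, .atom c => h ∈ den (eval h t c) ∧ t ∈ den (eval t t c)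
  | h, t, .and φ ψ => sat den eval h t φ ∧ sat den eval h t ψ
  | h, t, .or φ ψ => sat den eval h t φ ∨ sat den eval h t ψ
  | h, t, .imp φ ψ =>
      (¬ sat den eval h t φ ∨ sat den eval h t ψ) ∧
      (¬ sat den eval t t φ ∨ sat den eval t t ψ)

/-- Persistence: for any interpretation `⟨h,t⟩` (i.e. `h ⊆ t`), selection function κ
(abstracted by `eval`), and formula `φ`, if `⟨h,t⟩ ⊨_κ φ` then `⟨t,t⟩ ⊨_κ φ`.
The denotation is assumed to be monotone. -/
theorem persistence {X D C C0 : Type} (den : C0 → Set (Val X D))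
    (eval : Val X D → Val X D → C → C0)
    (hmono : ∀ (c : C0) (v v' : Val X D), v ∈ den c → Val.le v v' → v' ∈ den c)
    (h t : Val X D) (hle : Val.le h t) (φ : Form C)
    (hsat : sat den eval h t φ) : sat den eval t t φ := by
  induction φ with
  | bot => exact hsat
  | atom c => exact ⟨hsat.2, hsat.2⟩
  | and φ ψ ihφ ihψ => exact ⟨ihφ hsat.1, ihψ hsat.2⟩
  | or φ ψ ihφ ihψ => exact hsat.elim (fun h' => Or.inl (ihφ h')) (fun h' => Or.inr (ihψ h'))
  | imp φ ψ _ _ => exact ⟨hsat.2, hsat.2⟩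
end

section
/- Substitution of HT tautologies: if φ(a₁,…,aₙ) is a tautology of the propositional logic of here-and-there, then the formula φ[a₁/α₁,…,aₙ/αₙ] obtained by uniformly replacing each propositional atom aᵢ by an HT_C formula αᵢ is an HT_C tautology. -/
/-- Propositional here-and-there satisfaction, over interpretations `⟨H,T⟩`
given as sets of atoms with `H ⊆ T`. -/
def satHT {A : Type} : Set A → Set A → Form A → Prop
  | _, _, .bot => False
  | H, _, .atom a => a ∈ H
  | H, T, .and φ ψ => satHT H T φ ∧ satHT H T ψ
  | H, T, .or φ ψ => satHT H T φ ∨ satHT H T ψ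
  | H, T, .imp φ ψ =>
      (¬ satHT H T φ ∨ satHT H T ψ) ∧ (¬ satHT T T φ ∨ satHT T T ψ)

/-- Uniform substitution of HT_C formulas for propositional atoms. -/
def Form.subst {A C : Type} (σ : A → Form C) : Form A → Form C
  | .bot => .bot
  | .atom a => σ a
  | .and φ ψ => .and (φ.subst σ) (ψ.subst σ)
  | .or φ ψ => .or (φ.subst σ) (ψ.subst σ)
  | .imp φ ψ => .imp (φ.subst σ) (ψ.subst σ)


/-- Persistence: satisfaction at `⟨h,t⟩` implies satisfaction at `⟨t,t⟩`. -/
theorem sat_persist {X D C C0 : Type} (den : C0 → Set (Val X D))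
    (eval : Val X D → Val X D → C → C0) (h t : Val X D) :
    ∀ φ : Form C, sat den eval h t φ → sat den eval t t φ := by
  intro φ
  induction φ with
  | bot => exact id
  | atom c => exact fun hc => ⟨hc.2, hc.2⟩
  | and φ ψ ihφ ihψ => exact fun hc => ⟨ihφ hc.1, ihψ hc.2⟩
  | or φ ψ ihφ ihψ => exact fun hc => hc.elim (fun a => Or.inl (ihφ a)) (fun a => Or.inr (ihψ a))
  | imp φ ψ ihφ ihψ => exact fun hc => ⟨hc.2, hc.2⟩

/-- The substitution lemma relating HT_C and HT satisfaction. -/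
theorem sat_subst_iff {X D A C C0 : Type} (den : C0 → Set (Val X D))
    (eval : Val X D → Val X D → C → C0) (σ : A → Form C) (t : Val X D) :
    ∀ (φ : Form A) (h : Val X D),
      sat den eval h t (φ.subst σ) ↔
        satHT {a | sat den eval h t (σ a)} {a | sat den eval t t (σ a)} φ := by
  intro φ
  induction φ with
  | bot => intro h; exact Iff.rfl
  | atom a => intro h; exact Iff.rfl
  | and φ ψ ihφ ihψ => intro h; exact and_congr (ihφ h) (ihψ h)
  | or φ ψ ihφ ihψ => intro h; exact or_congr (ihφ h) (ihψ h)
  | imp φ ψ ihφ ihψ =>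
      intro h
      exact and_congr (or_congr (not_congr (ihφ h)) (ihψ h))
        (or_congr (not_congr (ihφ t)) (ihψ t))

/-- If `φ` is an HT tautology, then the result of uniformly replacing each
propositional atom of `φ` by an HT_C formula is an HT_C tautology
(w.r.t. a fixed monotone denotation and selection function). -/
theorem ht_tautology_substitution {X D A C C0 : Type}
    (den : C0 → Set (Val X D))
    (eval : Val X D → Val X D → C → C0)
    (hmono : ∀ (c : C0) (v v' : Val X D), v ∈ den c → Val.le v v' → v' ∈ den c)
    (φ : Form A)
    (htaut : ∀ H T : Set A, H ⊆ T → satHT H T φ)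
    (σ : A → Form C) :
    ∀ h t : Val X D, Val.le h t → sat den eval h t (φ.subst σ) := by
  intro h t hle
  rw [sat_subst_iff]
  exact htaut _ _ (fun a ha => sat_persist den eval h t (σ a) ha)
end

section
/- Atom satisfaction via double negation: for any interpretation ⟨h,t⟩, selection function κ, and constraint atom c, ⟨h,t⟩ ⊨_κ c if and only if ⟨h,t⟩ ⊨ eval^κ⟨h,t⟩(c) ∧ ¬¬ eval⟨t,t⟩(c), where the right-hand conjuncts are basic (condition-free) atoms. -/
/-- Atom satisfaction via double negation:
`⟨h,t⟩ ⊨_κ c` iff `⟨h,t⟩ ⊨ eval^κ⟨h,t⟩(c) ∧ ¬¬ eval⟨t,t⟩(c)`.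
The right-hand side is a formula over basic (condition-free) atoms `C0`,
whose evaluation is the identity `fun _ _ c0 => c0`. -/
theorem atom_sat_double_negation {X D C C0 : Type} (den : C0 → Set (Val X D))
    (eval : Val X D → Val X D → C → C0)
    (hmono : ∀ (c : C0) (v v' : Val X D), v ∈ den c → Val.le v v' → v' ∈ den c)
    (h t : Val X D) (hle : Val.le h t) (c : C) :
    sat den eval h t (Form.atom c)
      ↔ sat den (fun _ _ (c0 : C0) => c0) h t
          (Form.and (Form.atom (eval h t c))
            (Form.imp (Form.imp (Form.atom (eval t t c)) Form.bot) Form.bot)) := by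
  have hm := hmono (eval h t c) h t
  simp only [sat]
  constructor
  · rintro ⟨h1, h2⟩
    exact ⟨⟨h1, hm h1 hle⟩, by tauto⟩
  · rintro ⟨⟨h1, -⟩, -, h2⟩
    refine ⟨h1, ?_⟩
    tauto
end

section
/- Linear constraint decomposition under vc (strict inequality): for any interpretation ⟨h,t⟩ and linear terms α, β: ⟨h,t⟩ ⊨_vc (α < β) iff ⟨h,t⟩ ⊨_vc (α ≤ β) ∧ ¬(α ≥ β). Moreover this equivalence can fail under the df-semantics. -/
/-- HT_C satisfaction `⟨h,t⟩ ⊨_κ α ≺ β` of a linear-constraint atom: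
at both worlds `w ∈ {h,t}`, the evaluations `v^κ⟨w,t⟩` of both linear terms
are integers standing in the relation `rel`.  `lval w t γ` is the evaluation
`v^κ⟨w,t⟩(γ)` of a linear term (`none` = undefined). -/
def satRel {X D L : Type} (lval : Val X D → Val X D → L → Option ℤ)
    (h t : Val X D) (α β : L) (rel : ℤ → ℤ → Prop) : Prop :=
  (∃ a b : ℤ, lval h t α = some a ∧ lval h t β = some b ∧ rel a b) ∧
  (∃ a b : ℤ, lval t t α = some a ∧ lval t t β = some b ∧ rel a b)

/-- The df-evaluation of the linear term `α = (0|1 : x=1)` over a single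
variable `x : Unit` and domain `ℤ`: at world `w` (w.r.t. `t'`), it is `0`
if `⟨w,t'⟩ ⊨ x = 1` and `1` otherwise. -/
def lvalCounter : Val Unit ℤ → Val Unit ℤ → Bool → Option ℤ :=
  fun w t' γ =>
    if γ then (if w () = some 1 ∧ t' () = some 1 then some 0 else some 1)
    else some 1

/-- Linear constraint decomposition under vc (strict inequality):
`⟨h,t⟩ ⊨_vc (α < β)` iff `⟨h,t⟩ ⊨_vc (α ≤ β) ∧ ¬(α ≥ β)`
(where `⟨h,t⟩ ⊨ ¬φ` iff `⟨t,t⟩ ⊭ φ`), under the vc preservation property.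
Moreover, the equivalence can fail under the df-semantics, witnessed by
`h(x) = u`, `t(x) = 1`, `α = (0|1 : x=1)` and `β = 1`. -/
theorem linear_decomposition_lt_vc :
    (∀ (X D L : Type) (lval : Val X D → Val X D → L → Option ℤ)
        (h t : Val X D), Val.le h t →
      -- vc preservation: defined here-values of linear terms persist
      (∀ γ : L, lval h t γ ≠ none → lval h t γ = lval t t γ) →
      ∀ α β : L,
        (satRel lval h t α β (· < ·)
          ↔ satRel lval h t α β (· ≤ ·) ∧ ¬ satRel lval t t α β (· ≥ ·))) ∧
    ¬ (satRel lvalCounter (fun _ => none) (fun _ => some 1) true false (· < ·)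
        ↔ satRel lvalCounter (fun _ => none) (fun _ => some 1) true false (· ≤ ·)
          ∧ ¬ satRel lvalCounter (fun _ => some 1) (fun _ => some 1) true false (· ≥ ·)) := by
  constructor
  · intro X D L lval h t _hle pres α β
    constructor
    · rintro ⟨⟨a, b, ha, hb, hab⟩, ⟨a', b', ha', hb', hab'⟩⟩
      refine ⟨⟨⟨a, b, ha, hb, le_of_lt hab⟩, ⟨a', b', ha', hb', le_of_lt hab'⟩⟩, ?_⟩
      rintro ⟨⟨c, d, hc, hd, hcd⟩, -⟩
      rw [ha'] at hc; rw [hb'] at hd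
      obtain rfl : a' = c := by injection hc
      obtain rfl : b' = d := by injection hd
      omega
    · rintro ⟨⟨⟨a, b, ha, hb, hab⟩, ⟨a', b', ha', hb', hab'⟩⟩, hneg⟩
      have hstrict : a' < b' := by
        rcases lt_or_eq_of_le hab' with h1 | h1
        · exact h1
        · exact absurd ⟨⟨a', b', ha', hb', le_of_eq h1.symm⟩,
            ⟨a', b', ha', hb', le_of_eq h1.symm⟩⟩ hneg
      have hα : lval h t α = lval t t α := pres α (by simp [ha])
      have hβ : lval h t β = lval t t β := pres β (by simp [hb])
      exact ⟨⟨a', b', hα ▸ ha', hβ ▸ hb', hstrict⟩, ⟨a', b', ha', hb', hstrict⟩⟩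
  · intro hiff
    have hlhs : ¬ satRel lvalCounter (fun _ => none) (fun _ => some 1) true false (· < ·) := by
      rintro ⟨⟨a, b, ha, hb, hab⟩, -⟩
      simp [lvalCounter, satRel] at ha hb
      omega
    apply hlhs
    rw [hiff]
    constructor
    · constructor
      · exact ⟨1, 1, by simp [lvalCounter], by simp [lvalCounter], le_refl 1⟩
      · exact ⟨0, 1, by simp [lvalCounter], by simp [lvalCounter], by norm_num⟩
    · rintro ⟨⟨a, b, ha, hb, hab⟩, -⟩
      simp [lvalCounter] at ha hb
      omega
end

section
/- Support lemma: let ⟨t,t⟩ be an equilibrium model of a program Π without assignment rules, x a variable with t(x) ≠ u, and h the valuation with h(x) = u and h(y) = t(y) for all other y. Then some rule r ∈ Π and positive head atom c of r satisfy: x ∈ vars(c); ⟨t,t⟩ does not satisfy any positive head atom c' of r with x ∉ vars(c'); ⟨h,t⟩ satisfies the body of r; and ⟨t,t⟩ does not satisfy the negative head of r. -/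
open Classical

/-- Strict inclusion of valuations. -/
def Val.lt {X D : Type} (v v' : Val X D) : Prop :=
  Val.le v v' ∧ ¬ Val.le v' v

/-- A rule `H ← B`: `H` a disjunction of literals (positive head atoms `hpos`
and negated head atoms `hneg`), `B` a conjunction of literals. -/
structure Rule (C : Type) where
  hpos : List C
  hneg : List C
  bpos : List C
  bneg : List C

/-- Variables occurring in a rule. -/
def Rule.vars {C X : Type} (varsC : C → Set X) (r : Rule C) : Set X :=
  (⋃ c ∈ r.hpos, varsC c) ∪ (⋃ c ∈ r.hneg, varsC c) ∪
  (⋃ c ∈ r.bpos, varsC c) ∪ (⋃ c ∈ r.bneg, varsC c)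

/-- Apply a function to all atoms of a rule. -/
def Rule.map {C : Type} (f : C → C) (r : Rule C) : Rule C :=
  ⟨r.hpos.map f, r.hneg.map f, r.bpos.map f, r.bneg.map f⟩

/-- Satisfaction of the body of a rule at world `w` w.r.t. `t`
(given the HT_C atom satisfaction `satA`); a negated literal `¬c` is
satisfied iff `⟨t,t⟩ ⊭ c`. -/
def satBody {X D C : Type} (satA : Val X D → Val X D → C → Prop)
    (w t : Val X D) (r : Rule C) : Prop :=
  (∀ c ∈ r.bpos, satA w t c) ∧ (∀ c ∈ r.bneg, ¬ satA t t c)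

/-- Satisfaction of the head of a rule at world `w` w.r.t. `t`. -/
def satHead {X D C : Type} (satA : Val X D → Val X D → C → Prop)
    (w t : Val X D) (r : Rule C) : Prop :=
  (∃ c ∈ r.hpos, satA w t c) ∨ (∃ c ∈ r.hneg, ¬ satA t t c)

/-- HT satisfaction of a rule: the implication is checked at both worlds. -/
def satRule {X D C : Type} (satA : Val X D → Val X D → C → Prop)
    (h t : Val X D) (r : Rule C) : Prop :=
  (satBody satA h t r → satHead satA h t r) ∧
  (satBody satA t t r → satHead satA t t r)

/-- `⟨h,t⟩` is a model of a program. -/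
def isModel {X D C : Type} (satA : Val X D → Val X D → C → Prop)
    (h t : Val X D) (P : Set (Rule C)) : Prop :=
  ∀ r ∈ P, satRule satA h t r

/-- `t` is a stable (equilibrium) model of a program. -/
def isStable {X D C : Type} (satA : Val X D → Val X D → C → Prop)
    (t : Val X D) (P : Set (Rule C)) : Prop :=
  isModel satA t t P ∧ ∀ h : Val X D, Val.lt h t → ¬ isModel satA h t P


/-- Support lemma: let `⟨t,t⟩` be an equilibrium model of a program `Π`
without assignment rules, `x` a variable with `t(x) ≠ u`, and `h` the
valuation with `h(x) = u` and `h(y) = t(y)` otherwise.  Then some rule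
`r ∈ Π` and positive head atom `c` of `r` satisfy: `x ∈ vars(c)`; `⟨t,t⟩`
does not satisfy any positive head atom `c'` of `r` with `x ∉ vars(c')`;
`⟨h,t⟩` satisfies the body of `r`; and `⟨t,t⟩` does not satisfy the negative
head of `r`. -/
theorem support_lemma {X D C : Type} [DecidableEq X]
    (satA : Val X D → Val X D → C → Prop)
    (varsC : C → Set X)
    -- persistence of atom satisfaction
    (hpers : ∀ (h t : Val X D) (c : C), Val.le h t → satA h t c → satA t t c)
    -- atom satisfaction depends only on the values of the atom's variables
    (hvars : ∀ (c : C) (h h' t t' : Val X D),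
      (∀ x ∈ varsC c, h x = h' x) → (∀ x ∈ varsC c, t x = t' x) →
      (satA h t c ↔ satA h' t' c))
    (P : Set (Rule C)) (t : Val X D)
    (hstable : isStable satA t P)
    (x : X) (hx : t x ≠ none) :
    ∃ r ∈ P, ∃ c ∈ r.hpos,
      x ∈ varsC c ∧
      (∀ c' ∈ r.hpos, x ∉ varsC c' → ¬ satA t t c') ∧
      satBody satA (fun y => if y = x then none else t y) t r ∧
      ¬ (∃ c' ∈ r.hneg, ¬ satA t t c') := by
  set h : Val X D := fun y => if y = x then none else t y with hh
  have hle : Val.le h t := by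
    intro y d hyd
    by_cases hyx : y = x
    · simp [hh, hyx] at hyd
    · simpa [hh, hyx] using hyd
  obtain ⟨d, hd⟩ : ∃ d, t x = some d := by
    cases hxv : t x with
    | none => exact absurd hxv hx
    | some d => exact ⟨d, rfl⟩
  have hlt : Val.lt h t := by
    refine ⟨hle, fun hge => ?_⟩
    have := hge x d hd
    simp [hh] at this
  have hnm := hstable.2 h hlt
  rw [isModel] at hnm
  push_neg at hnm
  obtain ⟨r, hrP, hr⟩ := hnm
  have htr := hstable.1 r hrP
  rw [satRule] at hr
  push_neg at hr
  have hfail : satBody satA h t r ∧ ¬ satHead satA h t r := by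
    by_cases h1 : satBody satA h t r → satHead satA h t r
    · obtain ⟨bt, nht⟩ := hr h1
      exact absurd (htr.2 bt) nht
    · push_neg at h1; exact h1
  obtain ⟨hbody, hnhead⟩ := hfail
  have hbodyt : satBody satA t t r :=
    ⟨fun c hc => hpers h t c hle (hbody.1 c hc), hbody.2⟩
  have hheadt : satHead satA t t r := htr.2 hbodyt
  have hnoneg : ¬ ∃ c' ∈ r.hneg, ¬ satA t t c' := by
    intro ⟨c', hc', hnc'⟩
    exact hnhead (Or.inr ⟨c', hc', hnc'⟩)
  obtain ⟨c, hc, hsc⟩ := hheadt.resolve_right hnoneg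
  have hnox : ∀ c' ∈ r.hpos, x ∉ varsC c' → ¬ satA t t c' := by
    intro c' hc' hxc' hsat
    have heq : satA t t c' ↔ satA h t c' := by
      refine hvars c' t h t t ?_ (fun _ _ => rfl)
      intro y hy
      have hyx : y ≠ x := fun e => hxc' (e ▸ hy)
      simp [hh, hyx]
    exact hnhead (Or.inl ⟨c', hc', heq.mp hsat⟩)
  have hxc : x ∈ varsC c := by
    by_contra hxc
    exact hnox c hc hxc hsc
  exact ⟨r, hrP, c, hc, hxc, hnox, hbody, hnoneg⟩
end
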